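/- Let β > 2, z ≥ 0 and s > 0. Then ∫_s^∞ (1 − e^{−zs/t}) · t^{2/β − 1} dt = s^{2/β} · (β/2) · (φ_β(z) − 1), where φ_β(z) = e^{−z} + z^{2/β} γ(1 − 2/β, z). (This integral is the exponent appearing in the Laplace transform E[e^{−zf} | L = s] = exp(−a(φ_β(z) − 1)s^{2/β}) of the interference factor f conditioned on the path-loss factor L in the infinite Poisson model.) -/

import Mathlib

/-!
The substitution `u = z s / t` maps `(s, ∞)` onto `(0, z)` and turns the integral into
`(z s)^c ∫_0^z (1 - e^{-u}) u^{-c-1} du` with `c = 2/β`. Since `(1 - e^{-u}) u^{-c}` has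
derivative `u^{-c} e^{-u} - c (1 - e^{-u}) u^{-c-1}` and vanishes at `0⁺` (because
`1 - e^{-u} ≤ u` and `c < 1`), integrating that derivative over `(0, z)` expresses `c` times the
integral through `γ(1 - c, z)`.
-/

open MeasureTheory Real

/-- The lower incomplete gamma function `γ(α, z) = ∫_0^z t^(α-1) e^{-t} dt`. -/
noncomputable def lowerIncGamma (α z : ℝ) : ℝ :=
  ∫ t in Set.Ioo (0:ℝ) z, t ^ (α - 1) * Real.exp (-t)

/-- `φ_β(z) = e^{-z} + z^{2/β} γ(1 - 2/β, z)`. -/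
noncomputable def phiBeta (β z : ℝ) : ℝ :=
  Real.exp (-z) + z ^ (2 / β) * lowerIncGamma (1 - 2 / β) z

open Set Filter Topology

section IntegrationByParts

variable {c : ℝ}

lemma abs_one_sub_exp_neg_mul_rpow_le {u : ℝ} (hu : 0 < u) (r : ℝ) :
    |(1 - exp (-u)) * u ^ r| ≤ u ^ (r + 1) := by
  have h_nonneg : 0 ≤ 1 - exp (-u) := by
    linarith [exp_le_one_iff.2 (neg_nonpos.2 hu.le)]
  rw [abs_of_nonneg (mul_nonneg h_nonneg (rpow_nonneg hu.le r)), rpow_add_one hu.ne', mul_comm]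
  gcongr
  linarith [one_sub_le_exp_neg u]

lemma integrableOn_one_sub_exp_neg_mul_rpow (hc : c < 1) (z : ℝ) :
    IntegrableOn (fun u => (1 - exp (-u)) * u ^ (-c - 1)) (Ioc 0 z) := by
  refine Integrable.mono' (intervalIntegral.intervalIntegrable_rpow' (r := -c) (by linarith)).1
    ?_ ?_
  · refine ContinuousOn.aestronglyMeasurable ?_ measurableSet_Ioc
    exact (continuous_const.sub (continuous_exp.comp continuous_neg)).continuousOn.mul
      (continuousOn_id.rpow_const fun u hu => Or.inl hu.1.ne')
  · filter_upwards [ae_restrict_mem measurableSet_Ioc] with u hu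
    simpa using abs_one_sub_exp_neg_mul_rpow_le hu.1 (-c - 1)

lemma integrableOn_rpow_mul_exp_neg (hc : c < 1) (z : ℝ) :
    IntegrableOn (fun u => u ^ (-c) * exp (-u)) (Ioc 0 z) := by
  have h_gamma := (GammaIntegral_convergent (s := 1 - c) (by linarith)).mono_set
    (Ioc_subset_Ioi_self : Ioc 0 z ⊆ Ioi 0)
  simpa [mul_comm] using h_gamma

lemma hasDerivAt_one_sub_exp_neg_mul_rpow (c : ℝ) {u : ℝ} (hu : u ≠ 0) :
    HasDerivAt (fun u => (1 - exp (-u)) * u ^ (-c))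
      (u ^ (-c) * exp (-u) - c * ((1 - exp (-u)) * u ^ (-c - 1))) u := by
  have h_exp : HasDerivAt (fun u => 1 - exp (-u)) (exp (-u)) u := by
    simpa using ((hasDerivAt_neg u).exp).const_sub 1
  exact (h_exp.mul (hasDerivAt_rpow_const (p := -c) (Or.inl hu))).congr_deriv (by ring)

lemma tendsto_one_sub_exp_neg_mul_rpow_zero (hc : c < 1) :
    Tendsto (fun u => (1 - exp (-u)) * u ^ (-c)) (𝓝[>] 0) (𝓝 0) := by
  have h_bound : Tendsto (fun u : ℝ => u ^ (-c + 1)) (𝓝[>] 0) (𝓝 0) := by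
    have := (continuousAt_rpow_const 0 (-c + 1) (Or.inr (by linarith))).tendsto
    rw [zero_rpow (by linarith)] at this
    exact this.mono_left nhdsWithin_le_nhds
  refine squeeze_zero_norm' ?_ h_bound
  filter_upwards [self_mem_nhdsWithin] with u hu
  exact abs_one_sub_exp_neg_mul_rpow_le hu (-c)

lemma mul_integral_one_sub_exp_neg_mul_rpow (hc : c < 1) {z : ℝ} (hz : 0 < z) :
    c * ∫ u in Ioo 0 z, (1 - exp (-u)) * u ^ (-c - 1)
      = lowerIncGamma (1 - c) z - (1 - exp (-z)) * z ^ (-c) := by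
  have h_gamma := integrableOn_rpow_mul_exp_neg hc z
  have h_main : IntegrableOn (fun u => c * ((1 - exp (-u)) * u ^ (-c - 1))) (Ioc 0 z) :=
    (integrableOn_one_sub_exp_neg_mul_rpow hc z).const_mul c
  have h_int := h_gamma.sub h_main
  have h_ftc := intervalIntegral.integral_eq_sub_of_hasDerivAt_of_tendsto hz
    (fun u hu => hasDerivAt_one_sub_exp_neg_mul_rpow c hu.1.ne')
    ((intervalIntegrable_iff_integrableOn_Ioc_of_le hz.le).2 h_int)
    (tendsto_one_sub_exp_neg_mul_rpow_zero hc)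
    (hasDerivAt_one_sub_exp_neg_mul_rpow c hz.ne').continuousAt.continuousWithinAt
  rw [intervalIntegral.integral_of_le hz.le, integral_Ioc_eq_integral_Ioo,
    integral_sub (h_gamma.mono_set Ioo_subset_Ioc_self) (h_main.mono_set Ioo_subset_Ioc_self),
    integral_const_mul] at h_ftc
  rw [lowerIncGamma, sub_sub_cancel_left]
  linarith

end IntegrationByParts

section ChangeOfVariables

variable {a b : ℝ}

lemma image_mul_div_Ioo_zero (ha : 0 < a) (hb : 0 < b) :
    (fun u => b * a / u) '' Ioo 0 b = Ioi a := by
  ext t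
  constructor
  · rintro ⟨u, ⟨hu0, hub⟩, rfl⟩
    rw [mem_Ioi, lt_div_iff₀ hu0]
    nlinarith
  · intro (ht : a < t)
    have ht0 : 0 < t := ha.trans ht
    refine ⟨b * a / t, ⟨by positivity, ?_⟩, by field_simp⟩
    rw [div_lt_iff₀ ht0]
    nlinarith

lemma injOn_mul_div_Ioo_zero (ha : 0 < a) (hb : 0 < b) :
    InjOn (fun u => b * a / u) (Ioo 0 b) := by
  intro u hu v hv h
  rw [div_eq_div_iff hu.1.ne' hv.1.ne'] at h
  exact (mul_left_cancel₀ (mul_pos hb ha).ne' h).symm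

lemma integral_Ioi_eq_integral_Ioo_comp_div {E : Type*} [NormedAddCommGroup E] [NormedSpace ℝ E]
    (g : ℝ → E) (ha : 0 < a) (hb : 0 < b) :
    ∫ t in Ioi a, g t = ∫ u in Ioo 0 b, (b * a / u ^ 2) • g (b * a / u) := by
  have h_deriv : ∀ u ∈ Ioo 0 b,
      HasDerivWithinAt (fun u => b * a / u) (-(b * a / u ^ 2)) (Ioo 0 b) u := by
    intro u hu
    have := (hasDerivAt_inv hu.1.ne').const_mul (b * a)
    simp only [← div_eq_mul_inv, mul_neg] at this
    exact this.hasDerivWithinAt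
  rw [← image_mul_div_Ioo_zero ha hb, integral_image_eq_integral_abs_deriv_smul measurableSet_Ioo
    h_deriv (injOn_mul_div_Ioo_zero ha hb)]
  refine setIntegral_congr_fun measurableSet_Ioo fun u hu => ?_
  have h_jac : 0 < b * a / u ^ 2 := by have := hu.1; positivity
  rw [abs_neg, abs_of_pos h_jac]

end ChangeOfVariables

lemma integral_Ioi_one_sub_exp_neg_div_mul_rpow (c : ℝ) {a b : ℝ} (ha : 0 < a) (hb : 0 < b) :
    ∫ t in Ioi a, (1 - exp (-(b * a) / t)) * t ^ (c - 1)
      = (b * a) ^ c * ∫ u in Ioo 0 b, (1 - exp (-u)) * u ^ (-c - 1) := by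
  rw [integral_Ioi_eq_integral_Ioo_comp_div _ ha hb, ← integral_const_mul]
  refine setIntegral_congr_fun measurableSet_Ioo fun u hu => ?_
  have hba : 0 < b * a := mul_pos hb ha
  have hu0 : 0 < u := hu.1
  have h_exp : -(b * a) / (b * a / u) = -u := by field_simp
  have h_pow : b * a / u ^ 2 * (b * a / u) ^ (c - 1) = (b * a) ^ c * u ^ (-c - 1) := by
    rw [div_rpow hba.le hu0.le, rpow_sub_one hba.ne', rpow_sub_one hu0.ne',
      show -c - 1 = -(c + 1) by ring, rpow_neg hu0.le, rpow_add_one hu0.ne']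
    field_simp
  rw [smul_eq_mul, h_exp]
  linear_combination (1 - exp (-u)) * h_pow

theorem stmt_9 (β z s : ℝ) (hβ : 2 < β) (hz : 0 ≤ z) (hs : 0 < s) :
    ∫ t in Set.Ioi s, (1 - Real.exp (-(z * s) / t)) * t ^ (2 / β - 1)
      = s ^ (2 / β) * (β / 2) * (phiBeta β z - 1) := by
  have hc0 : 0 < 2 / β := by positivity
  have hc1 : 2 / β < 1 := (div_lt_one (by linarith)).2 hβ
  obtain rfl | hz := hz.eq_or_lt
  · simp [phiBeta, lowerIncGamma, zero_rpow hc0.ne']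
  have h_parts := mul_integral_one_sub_exp_neg_mul_rpow hc1 hz
  rw [integral_Ioi_one_sub_exp_neg_div_mul_rpow _ hs hz, phiBeta, mul_rpow hz.le hs.le]
  rw [rpow_neg hz.le] at h_parts
  field_simp at h_parts ⊢
  linear_combination h_parts
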